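/- Eta-expansion in DAf, positive case: for every positive-output (succedent synchronous) type P, the focused sequent vec(P) ⊢w [P] (with the succedent P focalised) is derivable in the weakly focalised calculus DAf. -/

import Mathlib

/-!
Formalisation of the displacement calculus with additives DA, the weakly
focalised calculus DAf (with and without Cut) and the strongly focalised
calculus DAFoc, following Morrill–Valentín.
-/

namespace DA

/-- Bias of atomic types. -/
inductive Bias : Type where
  | pos
  | neg
deriving DecidableEq

/-- Types of the displacement calculus with additives, indexed by their sort. -/
inductive Ty : ℕ → Type where
  | atom (b : Bias) (name : ℕ) (i : ℕ) : Ty i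
  | over {i j : ℕ} : Ty (i + j) → Ty j → Ty i                                   -- C / B
  | under {i j : ℕ} : Ty i → Ty (i + j) → Ty j                                  -- A \ C
  | prod {i j : ℕ} : Ty i → Ty j → Ty (i + j)                                   -- A • B
  | unitI : Ty 0                                                                -- I
  | circ {i j : ℕ} (k : ℕ) (hk : 1 ≤ k ∧ k ≤ i + 1) : Ty (i + j) → Ty j → Ty (i + 1)   -- C ↑ₖ B
  | infx {i j : ℕ} (k : ℕ) (hk : 1 ≤ k ∧ k ≤ i + 1) : Ty (i + 1) → Ty (i + j) → Ty j   -- A ↓ₖ C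
  | wprod {i j : ℕ} (k : ℕ) (hk : 1 ≤ k ∧ k ≤ i + 1) : Ty (i + 1) → Ty j → Ty (i + j)  -- A ⊙ₖ B
  | unitJ : Ty 1                                                                -- J
  | amp {i : ℕ} : Ty i → Ty i → Ty i                                            -- A & B
  | oplus {i : ℕ} : Ty i → Ty i → Ty i                                          -- A ⊕ B

/-- `posb A = true` iff `A` is synchronous as an output (positive output /
asynchronous as an input): positive atoms and `•`, `I`, `⊙ₖ`, `J`, `⊕`.
Otherwise `A` is synchronous as an input (negative atoms and `/`, `\`, `↑ₖ`,
`↓ₖ`, `&`). -/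
def posb {i : ℕ} : Ty i → Bool
  | .atom .pos _ _ => true
  | .atom .neg _ _ => false
  | .over _ _ => false
  | .under _ _ => false
  | .prod _ _ => true
  | .unitI => true
  | .circ _ _ _ _ => false
  | .infx _ _ _ _ => false
  | .wprod _ _ _ _ => true
  | .unitJ => true
  | .amp _ _ => false
  | .oplus _ _ => true

def isAtom {i : ℕ} : Ty i → Bool
  | .atom _ _ _ => true
  | _ => false

/-- Elements of configurations: the separator `1`, types of sort 0, and
figures `A{Δ₁ : … : Δ_{sA}}` of types of sort `> 0`; together with *boxed*
(focalised) variants of the latter two, used by the focalised calculi. -/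
inductive BTree : Type where
  | sep : BTree
  | type0 : Ty 0 → BTree
  | btype0 : Ty 0 → BTree
  | fig {i : ℕ} : Ty (i + 1) → (Fin (i + 1) → List BTree) → BTree
  | bfig {i : ℕ} : Ty (i + 1) → (Fin (i + 1) → List BTree) → BTree

/-- Configurations (possibly containing boxed, i.e. focalised, occurrences). -/
abbrev BConfig := List BTree

/-- The figure `vec(A)` of a type `A`. -/
def vecT {i : ℕ} (A : Ty i) : BTree :=
  match i, A with
  | 0, A => .type0 A
  | _ + 1, A => .fig A (fun _ => [BTree.sep])

def vec {i : ℕ} (A : Ty i) : BConfig := [vecT A]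

/-- The boxed (focalised) figure `[vec(A)]` of a type `A`. -/
def bvecT {i : ℕ} (A : Ty i) : BTree :=
  match i, A with
  | 0, A => .btype0 A
  | _ + 1, A => .bfig A (fun _ => [BTree.sep])

def bvec {i : ℕ} (A : Ty i) : BConfig := [bvecT A]

/-- The premise occurrence of an active antecedent subformula in a synchronous
rule: focalised (boxed) if it is synchronous in the antecedent (negative),
unfocalised if asynchronous (positive). -/
def fvec {i : ℕ} (A : Ty i) : BConfig := if posb A then vec A else bvec A

/-! Sort of a tree / configuration: its number of separators. -/
mutual
  inductive TreeSort : BTree → ℕ → Prop where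
    | sep : TreeSort .sep 1
    | type0 (A : Ty 0) : TreeSort (.type0 A) 0
    | btype0 (A : Ty 0) : TreeSort (.btype0 A) 0
    | fig {i : ℕ} (A : Ty (i + 1)) (args : Fin (i + 1) → BConfig) (ns : Fin (i + 1) → ℕ) :
        (∀ k, ConfigSort (args k) (ns k)) → TreeSort (.fig A args) (Finset.univ.sum ns)
    | bfig {i : ℕ} (A : Ty (i + 1)) (args : Fin (i + 1) → BConfig) (ns : Fin (i + 1) → ℕ) :
        (∀ k, ConfigSort (args k) (ns k)) → TreeSort (.bfig A args) (Finset.univ.sum ns)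
  inductive ConfigSort : BConfig → ℕ → Prop where
    | nil : ConfigSort [] 0
    | cons {t : BTree} {ts : BConfig} {n m : ℕ} :
        TreeSort t n → ConfigSort ts m → ConfigSort (t :: ts) (n + m)
end

/-! Number of boxed (focalised) formula occurrences in a tree / configuration. -/
mutual
  inductive TBoxes : BTree → ℕ → Prop where
    | sep : TBoxes .sep 0
    | type0 (A : Ty 0) : TBoxes (.type0 A) 0
    | btype0 (A : Ty 0) : TBoxes (.btype0 A) 1
    | fig {i : ℕ} (A : Ty (i + 1)) (args : Fin (i + 1) → BConfig) (ns : Fin (i + 1) → ℕ) :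
        (∀ k, CBoxes (args k) (ns k)) → TBoxes (.fig A args) (Finset.univ.sum ns)
    | bfig {i : ℕ} (A : Ty (i + 1)) (args : Fin (i + 1) → BConfig) (ns : Fin (i + 1) → ℕ) :
        (∀ k, CBoxes (args k) (ns k)) → TBoxes (.bfig A args) (Finset.univ.sum ns + 1)
  inductive CBoxes : BConfig → ℕ → Prop where
    | nil : CBoxes [] 0
    | cons {t : BTree} {ts : BConfig} {n m : ℕ} :
        TBoxes t n → CBoxes ts m → CBoxes (t :: ts) (n + m)
end

/-! The fold `Γ ⊗ ⟨Δ₁ : … : Δ_i⟩`: `FoldC Γ [Δ₁,…,Δ_i] res` holds iff `res` is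
the result of replacing the successive separators of `Γ` by `Δ₁,…,Δ_i`. -/
mutual
  inductive FoldT : BTree → List BConfig → BConfig → Prop where
    | sep (Δ : BConfig) : FoldT .sep [Δ] Δ
    | type0 (A : Ty 0) : FoldT (.type0 A) [] [.type0 A]
    | btype0 (A : Ty 0) : FoldT (.btype0 A) [] [.btype0 A]
    | fig {i : ℕ} (A : Ty (i + 1)) (args args' : Fin (i + 1) → BConfig)
        (reps : Fin (i + 1) → List BConfig) :
        (∀ k, FoldC (args k) (reps k) (args' k)) →
        FoldT (.fig A args) (List.ofFn reps).flatten [.fig A args']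
    | bfig {i : ℕ} (A : Ty (i + 1)) (args args' : Fin (i + 1) → BConfig)
        (reps : Fin (i + 1) → List BConfig) :
        (∀ k, FoldC (args k) (reps k) (args' k)) →
        FoldT (.bfig A args) (List.ofFn reps).flatten [.bfig A args']
  inductive FoldC : BConfig → List BConfig → BConfig → Prop where
    | nil : FoldC [] [] []
    | cons {t : BTree} {ts : BConfig} {r1 r2 : List BConfig} {c1 c2 : BConfig} :
        FoldT t r1 c1 → FoldC ts r2 c2 → FoldC (t :: ts) (r1 ++ r2) (c1 ++ c2)
end

/-- The `k`-th metalinguistic wrap `Δ |ₖ Γ`: `Wrap Δ k Γ res` holds iff `res`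
is the result of replacing the `k`-th separator of `Δ` by `Γ`. -/
def Wrap (Δ : BConfig) (k : ℕ) (Γ res : BConfig) : Prop :=
  ∃ n : ℕ, ConfigSort Δ n ∧
    FoldC Δ ((List.replicate n ([BTree.sep] : BConfig)).set (k - 1) Γ) res

/-! One-hole contexts `Δ₀(—)` for configurations: the hole is a configuration
position, either at the top level or nested inside a figure argument. -/
mutual
  inductive THole : Type where
    | fig {i : ℕ} (A : Ty (i + 1)) (args : Fin (i + 1) → BConfig) (k : Fin (i + 1))
        (c : CHole) : THole
    | bfig {i : ℕ} (A : Ty (i + 1)) (args : Fin (i + 1) → BConfig) (k : Fin (i + 1))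
        (c : CHole) : THole
  inductive CHole : Type where
    | top (pre post : BConfig) : CHole
    | deep (pre : BConfig) (t : THole) (post : BConfig) : CHole
end

/-! Plugging a configuration into a one-hole context. -/
mutual
  inductive PlugT : THole → BConfig → BTree → Prop where
    | fig {i : ℕ} (A : Ty (i + 1)) (args : Fin (i + 1) → BConfig) (k : Fin (i + 1))
        (c : CHole) (Γ plugged : BConfig) :
        PlugC c Γ plugged → PlugT (.fig A args k c) Γ (.fig A (Function.update args k plugged))
    | bfig {i : ℕ} (A : Ty (i + 1)) (args : Fin (i + 1) → BConfig) (k : Fin (i + 1))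
        (c : CHole) (Γ plugged : BConfig) :
        PlugC c Γ plugged → PlugT (.bfig A args k c) Γ (.bfig A (Function.update args k plugged))
  inductive PlugC : CHole → BConfig → BConfig → Prop where
    | top (pre post Γ : BConfig) : PlugC (.top pre post) Γ (pre ++ Γ ++ post)
    | deep (pre post Γ : BConfig) (t : THole) (tr : BTree) :
        PlugT t Γ tr → PlugC (.deep pre t post) Γ (pre ++ tr :: post)
end

/-- The data `Δ⟨—⟩ = Δ₀(— ⊗ ⟨Δ₁ : … : Δ_i⟩)` of a context in the generalised
sense of the displacement calculus. -/
structure Zone : Type where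
  hole : CHole
  reps : List BConfig

/-- `Sub Z Γ res` holds iff `res = Δ⟨Γ⟩` for the context `Δ⟨—⟩` given by `Z`,
i.e. `res = Δ₀(Γ ⊗ ⟨Δ₁ : … : Δ_i⟩)`. -/
def Sub (Z : Zone) (Γ res : BConfig) : Prop :=
  ∃ folded : BConfig, FoldC Γ Z.reps folded ∧ PlugC Z.hole folded res

/-- The displacement calculus with additives DA: `DADeriv Δ i A` is
derivability of the sequent `Δ ⇒ A` (identity axiom restricted to atoms). -/
inductive DADeriv : BConfig → ∀ i : ℕ, Ty i → Prop where
  | id (b : Bias) (name i : ℕ) :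
      DADeriv (vec (.atom b name i)) i (.atom b name i)
  | overR {i j : ℕ} {Γ : BConfig} {C : Ty (i + j)} {B : Ty j} :
      DADeriv (Γ ++ vec B) (i + j) C → DADeriv Γ i (.over C B)
  | overL {i j d : ℕ} {Γ s1 s2 : BConfig} {B : Ty j} {C : Ty (i + j)} {Z : Zone} {D : Ty d} :
      DADeriv Γ j B → Sub Z (vec C) s1 → DADeriv s1 d D →
      Sub Z (vec (.over C B) ++ Γ) s2 → DADeriv s2 d D
  | underR {i j : ℕ} {Γ : BConfig} {A : Ty i} {C : Ty (i + j)} :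
      DADeriv (vec A ++ Γ) (i + j) C → DADeriv Γ j (.under A C)
  | underL {i j d : ℕ} {Γ s1 s2 : BConfig} {A : Ty i} {C : Ty (i + j)} {Z : Zone} {D : Ty d} :
      DADeriv Γ i A → Sub Z (vec C) s1 → DADeriv s1 d D →
      Sub Z (Γ ++ vec (.under A C)) s2 → DADeriv s2 d D
  | prodR {i j : ℕ} {Γ1 Γ2 : BConfig} {A : Ty i} {B : Ty j} :
      DADeriv Γ1 i A → DADeriv Γ2 j B → DADeriv (Γ1 ++ Γ2) (i + j) (.prod A B)
  | prodL {i j d : ℕ} {s1 s2 : BConfig} {A : Ty i} {B : Ty j} {Z : Zone} {D : Ty d} :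
      Sub Z (vec A ++ vec B) s1 → DADeriv s1 d D →
      Sub Z (vec (.prod A B)) s2 → DADeriv s2 d D
  | unitIR : DADeriv [] 0 .unitI
  | unitIL {d : ℕ} {s1 s2 : BConfig} {Z : Zone} {D : Ty d} :
      Sub Z [] s1 → DADeriv s1 d D → Sub Z (vec .unitI) s2 → DADeriv s2 d D
  | circR {i j : ℕ} (k : ℕ) (hk : 1 ≤ k ∧ k ≤ i + 1) {Γ w : BConfig}
      {C : Ty (i + j)} {B : Ty j} :
      Wrap Γ k (vec B) w → DADeriv w (i + j) C → DADeriv Γ (i + 1) (.circ k hk C B)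
  | circL {i j d : ℕ} (k : ℕ) (hk : 1 ≤ k ∧ k ≤ i + 1) {Γ w s1 s2 : BConfig}
      {C : Ty (i + j)} {B : Ty j} {Z : Zone} {D : Ty d} :
      DADeriv Γ j B → Sub Z (vec C) s1 → DADeriv s1 d D →
      Wrap (vec (Ty.circ k hk C B)) k Γ w → Sub Z w s2 → DADeriv s2 d D
  | infxR {i j : ℕ} (k : ℕ) (hk : 1 ≤ k ∧ k ≤ i + 1) {Γ w : BConfig}
      {A : Ty (i + 1)} {C : Ty (i + j)} :
      Wrap (vec A) k Γ w → DADeriv w (i + j) C → DADeriv Γ j (.infx k hk A C)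
  | infxL {i j d : ℕ} (k : ℕ) (hk : 1 ≤ k ∧ k ≤ i + 1) {Γ w s1 s2 : BConfig}
      {A : Ty (i + 1)} {C : Ty (i + j)} {Z : Zone} {D : Ty d} :
      DADeriv Γ (i + 1) A → Sub Z (vec C) s1 → DADeriv s1 d D →
      Wrap Γ k (vec (Ty.infx k hk A C)) w → Sub Z w s2 → DADeriv s2 d D
  | wprodR {i j : ℕ} (k : ℕ) (hk : 1 ≤ k ∧ k ≤ i + 1) {Γ1 Γ2 w : BConfig}
      {A : Ty (i + 1)} {B : Ty j} :
      DADeriv Γ1 (i + 1) A → DADeriv Γ2 j B → Wrap Γ1 k Γ2 w →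
      DADeriv w (i + j) (.wprod k hk A B)
  | wprodL {i j d : ℕ} (k : ℕ) (hk : 1 ≤ k ∧ k ≤ i + 1) {w s1 s2 : BConfig}
      {A : Ty (i + 1)} {B : Ty j} {Z : Zone} {D : Ty d} :
      Wrap (vec A) k (vec B) w → Sub Z w s1 → DADeriv s1 d D →
      Sub Z (vec (.wprod k hk A B)) s2 → DADeriv s2 d D
  | unitJR : DADeriv [BTree.sep] 1 .unitJ
  | unitJL {d : ℕ} {s1 s2 : BConfig} {Z : Zone} {D : Ty d} :
      Sub Z [BTree.sep] s1 → DADeriv s1 d D → Sub Z (vec .unitJ) s2 → DADeriv s2 d D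
  | ampR {i : ℕ} {Γ : BConfig} {A B : Ty i} :
      DADeriv Γ i A → DADeriv Γ i B → DADeriv Γ i (.amp A B)
  | ampL1 {i d : ℕ} {s1 s2 : BConfig} {A B : Ty i} {Z : Zone} {D : Ty d} :
      Sub Z (vec A) s1 → DADeriv s1 d D → Sub Z (vec (.amp A B)) s2 → DADeriv s2 d D
  | ampL2 {i d : ℕ} {s1 s2 : BConfig} {A B : Ty i} {Z : Zone} {D : Ty d} :
      Sub Z (vec B) s1 → DADeriv s1 d D → Sub Z (vec (.amp A B)) s2 → DADeriv s2 d D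
  | oplusR1 {i : ℕ} {Γ : BConfig} {A B : Ty i} :
      DADeriv Γ i A → DADeriv Γ i (.oplus A B)
  | oplusR2 {i : ℕ} {Γ : BConfig} {A B : Ty i} :
      DADeriv Γ i B → DADeriv Γ i (.oplus A B)
  | oplusL {i d : ℕ} {s1 s2 s3 : BConfig} {A B : Ty i} {Z : Zone} {D : Ty d} :
      Sub Z (vec A) s1 → DADeriv s1 d D → Sub Z (vec B) s2 → DADeriv s2 d D →
      Sub Z (vec (.oplus A B)) s3 → DADeriv s3 d D

/-! Occurrence of a type satisfying `φ` somewhere in a configuration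
(as the head type of a tree/figure, possibly nested). -/
mutual
  inductive TOcc (φ : ∀ j : ℕ, Ty j → Prop) : BTree → Prop where
    | type0 {A : Ty 0} : φ 0 A → TOcc φ (.type0 A)
    | btype0 {A : Ty 0} : φ 0 A → TOcc φ (.btype0 A)
    | figHead {i : ℕ} {A : Ty (i + 1)} {args : Fin (i + 1) → BConfig} :
        φ (i + 1) A → TOcc φ (.fig A args)
    | bfigHead {i : ℕ} {A : Ty (i + 1)} {args : Fin (i + 1) → BConfig} :
        φ (i + 1) A → TOcc φ (.bfig A args)
    | figArg {i : ℕ} {A : Ty (i + 1)} {args : Fin (i + 1) → BConfig} (k : Fin (i + 1)) :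
        COcc φ (args k) → TOcc φ (.fig A args)
    | bfigArg {i : ℕ} {A : Ty (i + 1)} {args : Fin (i + 1) → BConfig} (k : Fin (i + 1)) :
        COcc φ (args k) → TOcc φ (.bfig A args)
  inductive COcc (φ : ∀ j : ℕ, Ty j → Prop) : BConfig → Prop where
    | head {t : BTree} {ts : BConfig} : TOcc φ t → COcc φ (t :: ts)
    | tail {t : BTree} {ts : BConfig} : COcc φ ts → COcc φ (t :: ts)
end

/-- The sequent `Δ ⊢ A` contains a complex (non-atomic) asynchronous formula
occurrence: a non-atomic positive type in the antecedent, or a non-atomic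
negative succedent. -/
def HasComplexAsync (Δ : BConfig) (i : ℕ) (A : Ty i) : Prop :=
  COcc (fun _ B => posb B = true ∧ isAtom B = false) Δ ∨
    (posb A = false ∧ isAtom A = false)

/-- A sequent (antecedent plus succedent-focus flag) contains at most one
focalised formula. -/
def AtMostOne (Δ : BConfig) (f : Bool) : Prop :=
  if f then CBoxes Δ 0 else (CBoxes Δ 0 ∨ CBoxes Δ 1)

/-- A sequent contains exactly one focalised formula. -/
def ExactlyOne (Δ : BConfig) (f : Bool) : Prop :=
  if f then CBoxes Δ 0 else CBoxes Δ 1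

/-- Side condition of the strongly focalised calculus: a sequent containing a
focalised formula contains no complex asynchronous formula occurrence (and
vice versa). -/
def Ok (strong : Bool) (Δ : BConfig) (f : Bool) (i : ℕ) (A : Ty i) : Prop :=
  strong = true → ¬ ((f = true ∨ ¬ CBoxes Δ 0) ∧ HasComplexAsync Δ i A)

/-- Focalised sequent calculus: `DW cuts strong Δ f i A` is derivability of
the sequent `Δ ⊢ A`, whose succedent is focalised iff `f = true` and whose
focalised antecedent formulas are the boxed occurrences of `Δ`.
`cuts = true` allows the Cut rules (weakly focalised calculus DAf);
`cuts = false` is Cut-free DAf; `strong = true` additionally imposes the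
strong focalisation discipline (DAFoc, taken with `cuts = false`). -/
inductive DW (cuts strong : Bool) : BConfig → Bool → ∀ i : ℕ, Ty i → Prop where
  -- identity axioms, restricted to atoms
  | idP (name i : ℕ) :
      DW cuts strong (vec (.atom .pos name i)) true i (.atom .pos name i)
  | idQ (name i : ℕ) :
      DW cuts strong (bvec (.atom .neg name i)) false i (.atom .neg name i)
  -- focusing rules
  | focR {i : ℕ} {Δ : BConfig} {P : Ty i} :
      posb P = true →
      DW cuts strong Δ true i P →
      AtMostOne Δ false → Ok strong Δ false i P →
      DW cuts strong Δ false i P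
  | focL {j d : ℕ} {Q : Ty j} {D : Ty d} {Z : Zone} {s1 s2 : BConfig} :
      posb Q = false →
      Sub Z (bvec Q) s1 → DW cuts strong s1 false d D →
      Sub Z (vec Q) s2 → AtMostOne s2 false → Ok strong s2 false d D →
      DW cuts strong s2 false d D
  -- asynchronous right rules
  | overR {i j : ℕ} {Γ : BConfig} {C : Ty (i + j)} {B : Ty j} :
      DW cuts strong (Γ ++ vec B) false (i + j) C →
      AtMostOne Γ false → Ok strong Γ false i (.over C B) →
      DW cuts strong Γ false i (.over C B)
  | underR {i j : ℕ} {Γ : BConfig} {A : Ty i} {C : Ty (i + j)} :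
      DW cuts strong (vec A ++ Γ) false (i + j) C →
      AtMostOne Γ false → Ok strong Γ false j (.under A C) →
      DW cuts strong Γ false j (.under A C)
  | circR {i j : ℕ} (k : ℕ) (hk : 1 ≤ k ∧ k ≤ i + 1) {Γ w : BConfig}
      {C : Ty (i + j)} {B : Ty j} :
      Wrap Γ k (vec B) w → DW cuts strong w false (i + j) C →
      AtMostOne Γ false → Ok strong Γ false (i + 1) (.circ k hk C B) →
      DW cuts strong Γ false (i + 1) (.circ k hk C B)
  | infxR {i j : ℕ} (k : ℕ) (hk : 1 ≤ k ∧ k ≤ i + 1) {Γ w : BConfig}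
      {A : Ty (i + 1)} {C : Ty (i + j)} :
      Wrap (vec A) k Γ w → DW cuts strong w false (i + j) C →
      AtMostOne Γ false → Ok strong Γ false j (.infx k hk A C) →
      DW cuts strong Γ false j (.infx k hk A C)
  | ampR {i : ℕ} {Γ : BConfig} {A B : Ty i} :
      DW cuts strong Γ false i A → DW cuts strong Γ false i B →
      AtMostOne Γ false → Ok strong Γ false i (.amp A B) →
      DW cuts strong Γ false i (.amp A B)
  -- asynchronous left rules
  | prodL {i j d : ℕ} {f : Bool} {s1 s2 : BConfig} {A : Ty i} {B : Ty j}
      {Z : Zone} {D : Ty d} :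
      Sub Z (vec A ++ vec B) s1 → DW cuts strong s1 f d D →
      Sub Z (vec (.prod A B)) s2 → AtMostOne s2 f → Ok strong s2 f d D →
      DW cuts strong s2 f d D
  | unitIL {d : ℕ} {f : Bool} {s1 s2 : BConfig} {Z : Zone} {D : Ty d} :
      Sub Z [] s1 → DW cuts strong s1 f d D →
      Sub Z (vec .unitI) s2 → AtMostOne s2 f → Ok strong s2 f d D →
      DW cuts strong s2 f d D
  | wprodL {i j d : ℕ} (k : ℕ) (hk : 1 ≤ k ∧ k ≤ i + 1) {f : Bool}
      {w s1 s2 : BConfig} {A : Ty (i + 1)} {B : Ty j} {Z : Zone} {D : Ty d} :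
      Wrap (vec A) k (vec B) w → Sub Z w s1 → DW cuts strong s1 f d D →
      Sub Z (vec (.wprod k hk A B)) s2 → AtMostOne s2 f → Ok strong s2 f d D →
      DW cuts strong s2 f d D
  | unitJL {d : ℕ} {f : Bool} {s1 s2 : BConfig} {Z : Zone} {D : Ty d} :
      Sub Z [BTree.sep] s1 → DW cuts strong s1 f d D →
      Sub Z (vec .unitJ) s2 → AtMostOne s2 f → Ok strong s2 f d D →
      DW cuts strong s2 f d D
  | oplusL {i d : ℕ} {f : Bool} {s1 s2 s3 : BConfig} {A B : Ty i} {Z : Zone} {D : Ty d} :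
      Sub Z (vec A) s1 → DW cuts strong s1 f d D →
      Sub Z (vec B) s2 → DW cuts strong s2 f d D →
      Sub Z (vec (.oplus A B)) s3 → AtMostOne s3 f → Ok strong s3 f d D →
      DW cuts strong s3 f d D
  -- synchronous left rules (active formula focalised)
  | overL {i j d : ℕ} {Γ s1 s2 : BConfig} {B : Ty j} {C : Ty (i + j)} {Z : Zone} {D : Ty d} :
      DW cuts strong Γ (posb B) j B →
      Sub Z (fvec C) s1 → DW cuts strong s1 false d D →
      Sub Z (bvec (.over C B) ++ Γ) s2 → AtMostOne s2 false → Ok strong s2 false d D →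
      DW cuts strong s2 false d D
  | underL {i j d : ℕ} {Γ s1 s2 : BConfig} {A : Ty i} {C : Ty (i + j)} {Z : Zone} {D : Ty d} :
      DW cuts strong Γ (posb A) i A →
      Sub Z (fvec C) s1 → DW cuts strong s1 false d D →
      Sub Z (Γ ++ bvec (.under A C)) s2 → AtMostOne s2 false → Ok strong s2 false d D →
      DW cuts strong s2 false d D
  | circL {i j d : ℕ} (k : ℕ) (hk : 1 ≤ k ∧ k ≤ i + 1) {Γ w s1 s2 : BConfig}
      {C : Ty (i + j)} {B : Ty j} {Z : Zone} {D : Ty d} :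
      DW cuts strong Γ (posb B) j B →
      Sub Z (fvec C) s1 → DW cuts strong s1 false d D →
      Wrap (bvec (Ty.circ k hk C B)) k Γ w → Sub Z w s2 →
      AtMostOne s2 false → Ok strong s2 false d D →
      DW cuts strong s2 false d D
  | infxL {i j d : ℕ} (k : ℕ) (hk : 1 ≤ k ∧ k ≤ i + 1) {Γ w s1 s2 : BConfig}
      {A : Ty (i + 1)} {C : Ty (i + j)} {Z : Zone} {D : Ty d} :
      DW cuts strong Γ (posb A) (i + 1) A →
      Sub Z (fvec C) s1 → DW cuts strong s1 false d D →
      Wrap Γ k (bvec (Ty.infx k hk A C)) w → Sub Z w s2 →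
      AtMostOne s2 false → Ok strong s2 false d D →
      DW cuts strong s2 false d D
  | ampL1 {i d : ℕ} {s1 s2 : BConfig} {A B : Ty i} {Z : Zone} {D : Ty d} :
      Sub Z (fvec A) s1 → DW cuts strong s1 false d D →
      Sub Z (bvec (.amp A B)) s2 → AtMostOne s2 false → Ok strong s2 false d D →
      DW cuts strong s2 false d D
  | ampL2 {i d : ℕ} {s1 s2 : BConfig} {A B : Ty i} {Z : Zone} {D : Ty d} :
      Sub Z (fvec B) s1 → DW cuts strong s1 false d D →
      Sub Z (bvec (.amp A B)) s2 → AtMostOne s2 false → Ok strong s2 false d D →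
      DW cuts strong s2 false d D
  -- synchronous right rules (succedent focalised)
  | prodR {i j : ℕ} {Γ1 Γ2 : BConfig} {A : Ty i} {B : Ty j} :
      DW cuts strong Γ1 (posb A) i A → DW cuts strong Γ2 (posb B) j B →
      AtMostOne (Γ1 ++ Γ2) true → Ok strong (Γ1 ++ Γ2) true (i + j) (.prod A B) →
      DW cuts strong (Γ1 ++ Γ2) true (i + j) (.prod A B)
  | unitIR : DW cuts strong [] true 0 .unitI
  | wprodR {i j : ℕ} (k : ℕ) (hk : 1 ≤ k ∧ k ≤ i + 1) {Γ1 Γ2 w : BConfig}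
      {A : Ty (i + 1)} {B : Ty j} :
      DW cuts strong Γ1 (posb A) (i + 1) A → DW cuts strong Γ2 (posb B) j B →
      Wrap Γ1 k Γ2 w →
      AtMostOne w true → Ok strong w true (i + j) (.wprod k hk A B) →
      DW cuts strong w true (i + j) (.wprod k hk A B)
  | unitJR : DW cuts strong [BTree.sep] true 1 .unitJ
  | oplusR1 {i : ℕ} {Γ : BConfig} {A B : Ty i} :
      DW cuts strong Γ (posb A) i A →
      AtMostOne Γ true → Ok strong Γ true i (.oplus A B) →
      DW cuts strong Γ true i (.oplus A B)
  | oplusR2 {i : ℕ} {Γ : BConfig} {A B : Ty i} :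
      DW cuts strong Γ (posb B) i B →
      AtMostOne Γ true → Ok strong Γ true i (.oplus A B) →
      DW cuts strong Γ true i (.oplus A B)
  -- Cut rules (weakly focalised calculus only)
  | pcut1 {j d : ℕ} {f : Bool} {Γ s1 s2 : BConfig} {P : Ty j} {Z : Zone} {C : Ty d} :
      cuts = true → posb P = true →
      DW cuts strong Γ true j P →
      Sub Z (vec P) s1 → DW cuts strong s1 f d C →
      Sub Z Γ s2 → AtMostOne s2 f →
      DW cuts strong s2 f d C
  | pcut2 {j d : ℕ} {Γ s1 s2 : BConfig} {N : Ty j} {Z : Zone} {C : Ty d} :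
      cuts = true → posb N = false →
      DW cuts strong Γ false j N →
      Sub Z (bvec N) s1 → DW cuts strong s1 false d C →
      Sub Z Γ s2 → AtMostOne s2 false →
      DW cuts strong s2 false d C
  | ncut1 {j d : ℕ} {Γ s1 s2 : BConfig} {P : Ty j} {Z : Zone} {C : Ty d} :
      cuts = true → posb P = true →
      DW cuts strong Γ false j P →
      Sub Z (vec P) s1 → CBoxes s1 0 → DW cuts strong s1 false d C →
      Sub Z Γ s2 → AtMostOne s2 false →
      DW cuts strong s2 false d C
  | ncut2 {j d : ℕ} {f : Bool} {Γ s1 s2 : BConfig} {N : Ty j} {Z : Zone} {C : Ty d} :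
      cuts = true → posb N = false →
      CBoxes Γ 0 → DW cuts strong Γ false j N →
      Sub Z (vec N) s1 → DW cuts strong s1 f d C →
      Sub Z Γ s2 → AtMostOne s2 f →
      DW cuts strong s2 f d C

/-- The weakly focalised calculus DAf. -/
abbrev DAf (Δ : BConfig) (f : Bool) (i : ℕ) (A : Ty i) : Prop := DW true false Δ f i A

/-- Cut-free DAf. -/
abbrev DAfCutFree (Δ : BConfig) (f : Bool) (i : ℕ) (A : Ty i) : Prop := DW false false Δ f i A

/-- The strongly focalised calculus DAFoc. -/
abbrev DAFoc (Δ : BConfig) (f : Bool) (i : ℕ) (A : Ty i) : Prop := DW false true Δ f i A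

/-- Transport of a type along an equality of sorts. -/
def tcast {i j : ℕ} (h : i = j) (A : Ty i) : Ty j := h ▸ A

end DA

/-!
The positive case is proved together with the negative one, `[vec(N)] ⊢w N`, by induction on
the type. A compound type is decomposed by its asynchronous rule and then by its synchronous
rule; the premises of the latter are the induction hypotheses, after `foc` has removed the box
from any subformula that occurs on the side where it is asynchronous. Every context involved is
the trivial one `— ⊗ ⟨1 : … : 1⟩`, and no Cut is used.
-/

namespace List

lemma flatten_ofFn_replicate {α : Type*} (a : α) {n : ℕ} (ns : Fin n → ℕ) :
    (ofFn fun k => replicate (ns k) a).flatten = replicate (Finset.univ.sum ns) a := by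
  induction n with
  | zero => simp
  | succ n ih => rw [ofFn_succ, flatten_cons, ih, Fin.sum_univ_succ, replicate_add]

lemma flatten_ofFn_singleton {α : Type*} {n : ℕ} (g : Fin n → α) :
    (ofFn fun k => [g k]).flatten = ofFn g := by
  induction n with
  | zero => simp
  | succ n ih => simp [ofFn_succ, ih]

lemma ofFn_update_const {α : Type*} {n : ℕ} (a x : α) (p : Fin n) :
    ofFn (Function.update (fun _ => a) p x) = (replicate n a).set p x := by
  refine ext_getElem (by simp) fun k h _ => ?_
  simp only [List.getElem_ofFn, getElem_set, getElem_replicate, Function.update_apply,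
    Fin.ext_iff, eq_comm]

end List

namespace Fin

lemma sum_update_const {i : ℕ} (p : Fin (i + 1)) (c m : ℕ) :
    Finset.univ.sum (Function.update (fun _ : Fin (i + 1) => c) p m) = m + i * c := by
  simp [Finset.sum_update_of_mem (Finset.mem_univ p), Finset.card_sdiff]

end Fin

namespace DA

section Bookkeeping

variable {Δ Γ : BConfig} {t : BTree} {n m : ℕ}

lemma ok_false {f : Bool} {i : ℕ} {A : Ty i} : Ok false Δ f i A :=
  fun h => nomatch h

lemma atMostOne_of_cboxes_zero {f : Bool} (h : CBoxes Δ 0) : AtMostOne Δ f := by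
  cases f <;> simp [AtMostOne, h]

lemma atMostOne_false_of_cboxes_one (h : CBoxes Δ 1) : AtMostOne Δ false :=
  Or.inr h

lemma ConfigSort.singleton (h : TreeSort t n) : ConfigSort [t] n :=
  .cons h .nil

lemma CBoxes.singleton (h : TBoxes t n) : CBoxes [t] n :=
  .cons h .nil

lemma ConfigSort.append (h₁ : ConfigSort Δ n) (h₂ : ConfigSort Γ m) :
    ConfigSort (Δ ++ Γ) (n + m) := by
  induction Δ generalizing n with
  | nil => cases h₁; simpa using h₂
  | cons t ts ih =>
    cases h₁ with
    | cons ht hts => exact Nat.add_assoc _ _ _ ▸ .cons ht (ih hts)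

lemma CBoxes.append (h₁ : CBoxes Δ n) (h₂ : CBoxes Γ m) : CBoxes (Δ ++ Γ) (n + m) := by
  induction Δ generalizing n with
  | nil => cases h₁; simpa using h₂
  | cons t ts ih =>
    cases h₁ with
    | cons ht hts => exact Nat.add_assoc _ _ _ ▸ .cons ht (ih hts)

lemma configSort_sep : ConfigSort [BTree.sep] 1 :=
  .singleton .sep

lemma configSort_vec {i : ℕ} (A : Ty i) : ConfigSort (vec A) i :=
  match i, A with
  | 0, A => .singleton (.type0 A)
  | _ + 1, A => .singleton (t := .fig A _)
      (by simpa using TreeSort.fig A _ (fun _ => 1) fun _ => configSort_sep)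

lemma configSort_bvec {i : ℕ} (A : Ty i) : ConfigSort (bvec A) i :=
  match i, A with
  | 0, A => .singleton (.btype0 A)
  | _ + 1, A => .singleton (t := .bfig A _)
      (by simpa using TreeSort.bfig A _ (fun _ => 1) fun _ => configSort_sep)

lemma configSort_fvec {i : ℕ} (A : Ty i) : ConfigSort (fvec A) i := by
  unfold fvec
  split
  exacts [configSort_vec A, configSort_bvec A]

lemma cboxes_vec {i : ℕ} (A : Ty i) : CBoxes (vec A) 0 :=
  match i, A with
  | 0, A => .singleton (.type0 A)
  | _ + 1, A => .singleton (t := .fig A _)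
      (by simpa using TBoxes.fig A _ (fun _ => 0) fun _ => .singleton .sep)

lemma cboxes_bvec {i : ℕ} (A : Ty i) : CBoxes (bvec A) 1 :=
  match i, A with
  | 0, A => .singleton (.btype0 A)
  | _ + 1, A => .singleton (t := .bfig A _)
      (by simpa using TBoxes.bfig A _ (fun _ => 0) fun _ => .singleton .sep)

end Bookkeeping

section Contexts

variable {Δ : BConfig} {n : ℕ}

lemma FoldC.singleton {t : BTree} {reps : List BConfig} (h : FoldT t reps Δ) :
    FoldC [t] reps Δ := by
  simpa using FoldC.cons h .nil

lemma foldC_replicate_sep (h : ConfigSort Δ n) : FoldC Δ (List.replicate n [BTree.sep]) Δ := by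
  induction h using ConfigSort.rec
    (motive_1 := fun t n _ => FoldT t (List.replicate n [BTree.sep]) [t]) with
  | sep => exact .sep [BTree.sep]
  | type0 A => exact .type0 A
  | btype0 A => exact .btype0 A
  | fig A args ns _ ih =>
    have hfold := FoldT.fig A args args (fun k => .replicate (ns k) [BTree.sep]) ih
    rwa [List.flatten_ofFn_replicate] at hfold
  | bfig A args ns _ ih =>
    have hfold := FoldT.bfig A args args (fun k => .replicate (ns k) [BTree.sep]) ih
    rwa [List.flatten_ofFn_replicate] at hfold
  | nil => exact .nil
  | cons _ _ iht ihc => exact List.replicate_add .. ▸ FoldC.cons iht ihc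

/-- The trivial context `Δ⟨—⟩ = — ⊗ ⟨1 : … : 1⟩` for a hole of sort `n`. -/
def Zone.trivial (n : ℕ) : Zone :=
  ⟨.top [] [], List.replicate n [BTree.sep]⟩

lemma sub_trivial (h : ConfigSort Δ n) : Sub (Zone.trivial n) Δ Δ :=
  ⟨Δ, foldC_replicate_sep h, (by simpa using PlugC.top [] [] Δ : PlugC (.top [] []) Δ Δ)⟩

end Contexts

section Wrapping

variable {i m : ℕ}

def wrapArgs (p : Fin (i + 1)) (Γ : BConfig) : Fin (i + 1) → BConfig :=
  Function.update (fun _ => [BTree.sep]) p Γ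

/-- `Wrap` counts separators from `1`, `Fin` from `0`. -/
def wrapPos (k : ℕ) (hk : 1 ≤ k ∧ k ≤ i + 1) : Fin (i + 1) :=
  ⟨k - 1, by omega⟩

lemma foldT_fig_wrapArgs (A : Ty (i + 1)) (p : Fin (i + 1)) (Γ : BConfig) :
    FoldT (.fig A fun _ => [BTree.sep]) ((List.replicate (i + 1) [BTree.sep]).set p Γ)
      [.fig A (wrapArgs p Γ)] := by
  have h := FoldT.fig A _ (wrapArgs p Γ) (fun k => [wrapArgs p Γ k])
    fun k => .singleton (.sep (wrapArgs p Γ k))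
  rwa [List.flatten_ofFn_singleton, wrapArgs, List.ofFn_update_const] at h

lemma foldT_bfig_wrapArgs (A : Ty (i + 1)) (p : Fin (i + 1)) (Γ : BConfig) :
    FoldT (.bfig A fun _ => [BTree.sep]) ((List.replicate (i + 1) [BTree.sep]).set p Γ)
      [.bfig A (wrapArgs p Γ)] := by
  have h := FoldT.bfig A _ (wrapArgs p Γ) (fun k => [wrapArgs p Γ k])
    fun k => .singleton (.sep (wrapArgs p Γ k))
  rwa [List.flatten_ofFn_singleton, wrapArgs, List.ofFn_update_const] at h

lemma wrap_vec (A : Ty (i + 1)) (k : ℕ) (hk : 1 ≤ k ∧ k ≤ i + 1) (Γ : BConfig) :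
    Wrap (vec A) k Γ [.fig A (wrapArgs (wrapPos k hk) Γ)] :=
  ⟨i + 1, configSort_vec A, .singleton (foldT_fig_wrapArgs A (wrapPos k hk) Γ)⟩

lemma wrap_bvec (A : Ty (i + 1)) (k : ℕ) (hk : 1 ≤ k ∧ k ≤ i + 1) (Γ : BConfig) :
    Wrap (bvec A) k Γ [.bfig A (wrapArgs (wrapPos k hk) Γ)] :=
  ⟨i + 1, configSort_bvec A, .singleton (foldT_bfig_wrapArgs A (wrapPos k hk) Γ)⟩

variable {Γ : BConfig} (A : Ty (i + 1)) (p : Fin (i + 1))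

lemma configSort_wrapArgs (h : ConfigSort Γ m) (q : Fin (i + 1)) :
    ConfigSort (wrapArgs p Γ q) (Function.update (fun _ => 1) p m q) := by
  rw [wrapArgs, Function.update_apply, Function.update_apply]
  split_ifs
  exacts [h, configSort_sep]

lemma cboxes_wrapArgs (h : CBoxes Γ m) (q : Fin (i + 1)) :
    CBoxes (wrapArgs p Γ q) (Function.update (fun _ => 0) p m q) := by
  rw [wrapArgs, Function.update_apply, Function.update_apply]
  split_ifs
  exacts [h, .singleton .sep]

lemma configSort_fig_wrapArgs (h : ConfigSort Γ m) :
    ConfigSort [.fig A (wrapArgs p Γ)] (i + m) :=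
  .singleton <| by
    simpa [Fin.sum_update_const, Nat.add_comm] using TreeSort.fig A _ _ (configSort_wrapArgs p h)

lemma configSort_bfig_wrapArgs (h : ConfigSort Γ m) :
    ConfigSort [.bfig A (wrapArgs p Γ)] (i + m) :=
  .singleton <| by
    simpa [Fin.sum_update_const, Nat.add_comm] using TreeSort.bfig A _ _ (configSort_wrapArgs p h)

lemma cboxes_fig_wrapArgs (h : CBoxes Γ m) : CBoxes [.fig A (wrapArgs p Γ)] m :=
  .singleton <| by simpa [Fin.sum_update_const] using TBoxes.fig A _ _ (cboxes_wrapArgs p h)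

lemma cboxes_bfig_wrapArgs (h : CBoxes Γ m) : CBoxes [.bfig A (wrapArgs p Γ)] (m + 1) :=
  .singleton <| by simpa [Fin.sum_update_const] using TBoxes.bfig A _ _ (cboxes_wrapArgs p h)

end Wrapping

section EtaExpansion

variable {cuts : Bool} {i j : ℕ}

lemma sub_trivial_vec (A : Ty i) : Sub (.trivial i) (vec A) (vec A) :=
  sub_trivial (configSort_vec A)

lemma sub_trivial_bvec (A : Ty i) : Sub (.trivial i) (bvec A) (bvec A) :=
  sub_trivial (configSort_bvec A)

lemma sub_trivial_fvec (A : Ty i) : Sub (.trivial i) (fvec A) (fvec A) :=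
  sub_trivial (configSort_fvec A)

lemma atMostOne_vec {f : Bool} (A : Ty i) : AtMostOne (vec A) f :=
  atMostOne_of_cboxes_zero (cboxes_vec A)

lemma atMostOne_bvec (A : Ty i) : AtMostOne (bvec A) false :=
  atMostOne_false_of_cboxes_one (cboxes_bvec A)

variable (cuts) in
/-- Eta-expansion for `A`: `vec(A) ⊢w [A]` if `A` is positive, `[vec(A)] ⊢w A` if negative. -/
abbrev Eta (A : Ty i) : Prop :=
  DW cuts false (fvec A) (posb A) i A

namespace Eta

lemma toVec {A : Ty i} (h : Eta cuts A) : DW cuts false (vec A) (posb A) i A := by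
  cases hA : posb A
  · rw [Eta, hA, fvec, hA] at h
    exact .focL (Z := .trivial i) hA (sub_trivial_bvec A) h (sub_trivial_vec A)
      (atMostOne_vec A) ok_false
  · rwa [Eta, hA, fvec, hA] at h

lemma unfocused {A : Ty i} (h : Eta cuts A) : DW cuts false (fvec A) false i A := by
  cases hA : posb A
  · rwa [Eta, hA] at h
  · rw [Eta, hA] at h
    rw [fvec, hA] at h ⊢
    exact .focR hA h (atMostOne_vec A) ok_false

lemma slash {C : Ty (i + j)} {B : Ty j} (hC : Eta cuts C) (hB : Eta cuts B) :
    Eta cuts (.over C B) :=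
  .overR (.overL (Z := .trivial (i + j)) hB.toVec (sub_trivial_fvec C) hC.unfocused
      (sub_trivial ((configSort_bvec _).append (configSort_vec B)))
      (atMostOne_false_of_cboxes_one ((cboxes_bvec _).append (cboxes_vec B))) ok_false)
    (atMostOne_bvec _) ok_false

lemma backslash {A : Ty i} {C : Ty (i + j)} (hA : Eta cuts A) (hC : Eta cuts C) :
    Eta cuts (.under A C) :=
  .underR (.underL (Z := .trivial (i + j)) hA.toVec (sub_trivial_fvec C) hC.unfocused
      (sub_trivial ((configSort_vec A).append (configSort_bvec _)))
      (atMostOne_false_of_cboxes_one ((cboxes_vec A).append (cboxes_bvec _))) ok_false)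
    (atMostOne_bvec _) ok_false

lemma prod {A : Ty i} {B : Ty j} (hA : Eta cuts A) (hB : Eta cuts B) :
    Eta cuts (.prod A B) :=
  .prodL (Z := .trivial (i + j)) (sub_trivial ((configSort_vec A).append (configSort_vec B)))
    (.prodR hA.toVec hB.toVec (atMostOne_of_cboxes_zero ((cboxes_vec A).append (cboxes_vec B)))
      ok_false)
    (sub_trivial_vec _) (atMostOne_vec _) ok_false

lemma unitI : Eta cuts .unitI :=
  .unitIL (Z := .trivial 0) (sub_trivial .nil) .unitIR (sub_trivial_vec _) (atMostOne_vec _)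
    ok_false

lemma circ (k : ℕ) (hk : 1 ≤ k ∧ k ≤ i + 1) {C : Ty (i + j)} {B : Ty j} (hC : Eta cuts C)
    (hB : Eta cuts B) : Eta cuts (.circ k hk C B) :=
  .circR k hk (wrap_bvec _ k hk (vec B))
    (.circL (Z := .trivial (i + j)) k hk hB.toVec (sub_trivial_fvec C) hC.unfocused
      (wrap_bvec _ k hk (vec B)) (sub_trivial (configSort_bfig_wrapArgs _ _ (configSort_vec B)))
      (atMostOne_false_of_cboxes_one (cboxes_bfig_wrapArgs _ _ (cboxes_vec B))) ok_false)
    (atMostOne_bvec _) ok_false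

lemma infx (k : ℕ) (hk : 1 ≤ k ∧ k ≤ i + 1) {A : Ty (i + 1)} {C : Ty (i + j)}
    (hA : Eta cuts A) (hC : Eta cuts C) : Eta cuts (.infx k hk A C) :=
  .infxR k hk (wrap_vec A k hk (bvec _))
    (.infxL (Z := .trivial (i + j)) k hk hA.toVec (sub_trivial_fvec C) hC.unfocused
      (wrap_vec A k hk (bvec _)) (sub_trivial (configSort_fig_wrapArgs A _ (configSort_bvec _)))
      (atMostOne_false_of_cboxes_one (cboxes_fig_wrapArgs A _ (cboxes_bvec _))) ok_false)
    (atMostOne_bvec _) ok_false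

lemma wprod (k : ℕ) (hk : 1 ≤ k ∧ k ≤ i + 1) {A : Ty (i + 1)} {B : Ty j}
    (hA : Eta cuts A) (hB : Eta cuts B) : Eta cuts (.wprod k hk A B) :=
  .wprodL (Z := .trivial (i + j)) k hk (wrap_vec A k hk (vec B))
    (sub_trivial (configSort_fig_wrapArgs A _ (configSort_vec B)))
    (.wprodR k hk hA.toVec hB.toVec (wrap_vec A k hk (vec B))
      (atMostOne_of_cboxes_zero (cboxes_fig_wrapArgs A _ (cboxes_vec B))) ok_false)
    (sub_trivial_vec _) (atMostOne_vec _) ok_false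

lemma unitJ : Eta cuts .unitJ :=
  .unitJL (Z := .trivial 1) (sub_trivial configSort_sep) .unitJR (sub_trivial_vec _)
    (atMostOne_vec _) ok_false

lemma amp {A B : Ty i} (hA : Eta cuts A) (hB : Eta cuts B) : Eta cuts (.amp A B) :=
  .ampR
    (.ampL1 (Z := .trivial i) (sub_trivial_fvec A) hA.unfocused (sub_trivial_bvec _)
      (atMostOne_bvec _) ok_false)
    (.ampL2 (Z := .trivial i) (sub_trivial_fvec B) hB.unfocused (sub_trivial_bvec _)
      (atMostOne_bvec _) ok_false)
    (atMostOne_bvec _) ok_false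

lemma oplus {A B : Ty i} (hA : Eta cuts A) (hB : Eta cuts B) : Eta cuts (.oplus A B) :=
  .oplusL (Z := .trivial i)
    (sub_trivial_vec A) (.oplusR1 hA.toVec (atMostOne_vec A) ok_false)
    (sub_trivial_vec B) (.oplusR2 hB.toVec (atMostOne_vec B) ok_false)
    (sub_trivial_vec _) (atMostOne_vec _) ok_false

end Eta

variable (cuts) in
theorem eta (A : Ty i) : Eta cuts A := by
  induction A with
  | atom b name i => cases b; exacts [.idP name i, .idQ name i]
  | under _ _ ihA ihC => exact ihA.backslash ihC
  | prod _ _ ihA ihB => exact ihA.prod ihB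
  | unitI => exact .unitI
  | circ k hk _ _ ihC ihB => exact .circ k hk ihC ihB
  | infx k hk _ _ ihA ihC => exact .infx k hk ihA ihC
  | wprod k hk _ _ ihA ihB => exact .wprod k hk ihA ihB
  | unitJ => exact .unitJ
  | amp _ _ ihA ihB => exact ihA.amp ihB
  | oplus _ _ ihA ihB => exact ihA.oplus ihB
  | _ =>
    -- the remaining case is `over`, whose name is a keyword and so cannot label an alternative
    rename_i ihC ihB
    exact ihC.slash ihB

end EtaExpansion

/-- Eta-expansion in DAf, positive case: for every positive-output
(succedent synchronous) type `P`, the focused sequent `vec(P) ⊢w [P]` is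
derivable in the weakly focalised calculus DAf. -/
theorem eta_expansion_DAf_positive :
    ∀ (i : ℕ) (P : Ty i), posb P = true → DAf (vec P) true i P := by
  intro i P hP
  simpa [hP] using (eta true P).toVec

end DA
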